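/- arXiv:2211.08041 — 3 statements merged into one kernel-verified Lean document; each statement's English description precedes it below -/
import Mathlib

section
/- Define Υ(x) = (2/√π)(x^{1/2} + x^{-1/2}) − 2(x + 3/2) e^x erfc(√x) for x > 0. Then as x → ∞, Υ(x) = (3/(2√π)) x^{-5/2} + O(x^{-7/2}); i.e., there exist C, x₀ > 0 such that |Υ(x) − (3/(2√π)) x^{-5/2}| ≤ C x^{-7/2} for all x ≥ x₀. -/
/-!
Integrating by parts four times gives the Gaussian tail with an explicit remainder,
`∫_y^∞ e^{-t²} dt = e^{-y²} (1/(2y) - 1/(4y³) + 3/(8y⁵) - 15/(16y⁷)) + (105/16) R(y)`,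
where `R(y) = ∫_y^∞ e^{-t²} t⁻⁸ dt`; since `t⁻⁸ ≤ t y⁻⁹` for `t ≥ y`, `0 ≤ R(y) ≤ e^{-y²} / (2y⁹)`.
Put `y = √x`: the factor `x + 3/2` in `Υ` makes the terms of order `x^{1/2}`, `x^{-1/2}` and
`x^{-3/2}` cancel, which leaves `3/(2√π) x^{-5/2} + 45/(8√π) x^{-7/2}` minus an error between `0`
and `525/(16√π) x^{-7/2}` for `x ≥ 1`.
-/

open Real MeasureTheory Set

/-- The complementary error function `erfc y = (2/√π) ∫_y^∞ e^{-t²} dt`. -/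
noncomputable def erfc (y : ℝ) : ℝ :=
  (2 / Real.sqrt π) * ∫ t in Set.Ioi y, Real.exp (-t ^ 2)

/-- `Υ(x) = (2/√π)(x^{1/2} + x^{-1/2}) − 2(x + 3/2) e^x erfc(√x)`. -/
noncomputable def Upsilon (x : ℝ) : ℝ :=
  (2 / Real.sqrt π) * (x ^ ((1 : ℝ) / 2) + x ^ (-(1 / 2) : ℝ))
    - 2 * (x + 3 / 2) * Real.exp x * erfc (Real.sqrt x)

open Filter Topology

lemma hasDerivAt_exp_neg_sq (t : ℝ) :
    HasDerivAt (fun t : ℝ => exp (-t ^ 2)) (-(2 * t) * exp (-t ^ 2)) t := by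
  simpa [mul_comm] using ((hasDerivAt_pow 2 t).neg).exp

lemma tendsto_exp_neg_sq_atTop : Tendsto (fun t : ℝ => exp (-t ^ 2)) atTop (𝓝 0) :=
  tendsto_exp_atBot.comp (tendsto_neg_atTop_atBot.comp (tendsto_pow_atTop two_ne_zero))

lemma integrableOn_Ioi_mul_exp_neg_sq {y : ℝ} :
    IntegrableOn (fun t : ℝ => t * exp (-t ^ 2)) (Ioi y) := by
  simpa using (integrable_mul_exp_neg_mul_sq one_pos).integrableOn

lemma integral_Ioi_mul_exp_neg_sq (y : ℝ) :
    ∫ t in Ioi y, t * exp (-t ^ 2) = exp (-y ^ 2) / 2 := by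
  have hderiv (t : ℝ) : HasDerivAt (fun t => -exp (-t ^ 2) / 2) (t * exp (-t ^ 2)) t :=
    ((hasDerivAt_exp_neg_sq t).neg.div_const 2).congr_deriv (by ring)
  have hlim : Tendsto (fun t : ℝ => -exp (-t ^ 2) / 2) atTop (𝓝 0) := by
    simpa using tendsto_exp_neg_sq_atTop.neg.div_const 2
  rw [integral_Ioi_of_hasDerivAt_of_tendsto' (fun t _ => hderiv t)
    integrableOn_Ioi_mul_exp_neg_sq hlim]
  ring

section GaussianTail

variable {y : ℝ} (n : ℕ)

lemma exp_neg_sq_div_pow_le (hy : 0 < y) {t : ℝ} (hyt : y ≤ t) :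
    exp (-t ^ 2) / t ^ n ≤ t * exp (-t ^ 2) / y ^ (n + 1) := by
  have ht : 0 < t := hy.trans_le hyt
  calc exp (-t ^ 2) / t ^ n = t * exp (-t ^ 2) / t ^ (n + 1) := by
        field_simp; ring
    _ ≤ t * exp (-t ^ 2) / y ^ (n + 1) := by gcongr

lemma integrableOn_Ioi_exp_neg_sq_div_pow (hy : 0 < y) :
    IntegrableOn (fun t : ℝ => exp (-t ^ 2) / t ^ n) (Ioi y) := by
  refine (integrableOn_Ioi_mul_exp_neg_sq.div_const (y ^ (n + 1))).mono' ?_ ?_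
  · exact ((by fun_prop : Continuous fun t : ℝ => exp (-t ^ 2)).continuousOn.div
      (continuousOn_pow n) fun _ ht => (pow_pos (hy.trans ht) n).ne').aestronglyMeasurable
      measurableSet_Ioi
  · refine (ae_restrict_iff' measurableSet_Ioi).2 (ae_of_all _ fun t ht => ?_)
    rw [norm_of_nonneg (div_nonneg (exp_pos _).le (pow_pos (hy.trans ht) n).le)]
    exact exp_neg_sq_div_pow_le n hy ht.le

lemma integral_Ioi_exp_neg_sq_div_pow_nonneg (hy : 0 < y) :
    0 ≤ ∫ t in Ioi y, exp (-t ^ 2) / t ^ n :=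
  setIntegral_nonneg measurableSet_Ioi fun _ ht =>
    div_nonneg (exp_pos _).le (pow_pos (hy.trans ht) n).le

lemma integral_Ioi_exp_neg_sq_div_pow_le (hy : 0 < y) :
    ∫ t in Ioi y, exp (-t ^ 2) / t ^ n ≤ exp (-y ^ 2) / (2 * y ^ (n + 1)) :=
  calc ∫ t in Ioi y, exp (-t ^ 2) / t ^ n
      ≤ ∫ t in Ioi y, t * exp (-t ^ 2) / y ^ (n + 1) :=
        setIntegral_mono_on (integrableOn_Ioi_exp_neg_sq_div_pow n hy)
          (integrableOn_Ioi_mul_exp_neg_sq.div_const _) measurableSet_Ioi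
          fun t ht => exp_neg_sq_div_pow_le n hy (le_of_lt ht)
    _ = exp (-y ^ 2) / (2 * y ^ (n + 1)) := by
        rw [integral_div, integral_Ioi_mul_exp_neg_sq]; ring

lemma exp_sq_mul_integral_Ioi_exp_neg_sq_div_pow_le (hy : 0 < y) :
    exp (y ^ 2) * ∫ t in Ioi y, exp (-t ^ 2) / t ^ n ≤ 1 / (2 * y ^ (n + 1)) :=
  calc exp (y ^ 2) * ∫ t in Ioi y, exp (-t ^ 2) / t ^ n
      ≤ exp (y ^ 2) * (exp (-y ^ 2) / (2 * y ^ (n + 1))) :=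
        mul_le_mul_of_nonneg_left (integral_Ioi_exp_neg_sq_div_pow_le n hy) (exp_pos _).le
    _ = 1 / (2 * y ^ (n + 1)) := by rw [exp_neg]; field_simp

end GaussianTail

noncomputable def gaussTailApprox (y : ℝ) : ℝ :=
  exp (-y ^ 2) * (1 / (2 * y) - 1 / (4 * y ^ 3) + 3 / (8 * y ^ 5) - 15 / (16 * y ^ 7))

lemma hasDerivAt_gaussTailApprox {t : ℝ} (ht : t ≠ 0) :
    HasDerivAt gaussTailApprox (-exp (-t ^ 2) + 105 / 16 * (exp (-t ^ 2) / t ^ 8)) t := by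
  have hterm (c d : ℝ) (hd : d ≠ 0) (k : ℕ) : HasDerivAt (fun t => c / (d * t ^ k))
      (-(c * (d * (k * t ^ (k - 1)))) / (d * t ^ k) ^ 2) t :=
    ((hasDerivAt_const t c).div ((hasDerivAt_pow k t).const_mul d) (by positivity)).congr_deriv
      (by ring)
  have hterm₁ := hterm 1 2 two_ne_zero 1
  simp only [pow_one] at hterm₁
  have h := (hasDerivAt_exp_neg_sq t).mul (((hterm₁.sub
    (hterm 1 4 four_ne_zero 3)).add (hterm 3 8 (by norm_num) 5)).sub
    (hterm 15 16 (by norm_num) 7))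
  refine h.congr_deriv ?_
  simp only [Pi.sub_apply, Pi.add_apply]
  field_simp
  ring

lemma tendsto_gaussTailApprox_atTop : Tendsto gaussTailApprox atTop (𝓝 0) := by
  have hpow (c d : ℝ) (hd : 0 < d) (k : ℕ) (hk : k ≠ 0) :
      Tendsto (fun t : ℝ => c / (d * t ^ k)) atTop (𝓝 0) :=
    tendsto_const_nhds.div_atTop ((tendsto_pow_atTop hk).const_mul_atTop hd)
  have h := tendsto_exp_neg_sq_atTop.mul ((((hpow 1 2 two_pos 1 one_ne_zero).sub
    (hpow 1 4 four_pos 3 three_ne_zero)).add (hpow 3 8 (by norm_num) 5 (by norm_num))).sub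
    (hpow 15 16 (by norm_num) 7 (by norm_num)))
  simp only [pow_one, sub_zero, add_zero, mul_zero] at h
  exact h

lemma integral_Ioi_exp_neg_sq_eq {y : ℝ} (hy : 0 < y) :
    ∫ t in Ioi y, exp (-t ^ 2) =
      gaussTailApprox y + 105 / 16 * ∫ t in Ioi y, exp (-t ^ 2) / t ^ 8 := by
  have hgauss : IntegrableOn (fun t : ℝ => exp (-t ^ 2)) (Ioi y) := by
    simpa using (integrable_exp_neg_mul_sq one_pos).integrableOn
  have hneg : IntegrableOn (fun t : ℝ => -exp (-t ^ 2)) (Ioi y) := hgauss.neg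
  have hrem := (integrableOn_Ioi_exp_neg_sq_div_pow 8 hy).const_mul (105 / 16)
  have hftc := integral_Ioi_of_hasDerivAt_of_tendsto'
    (fun t ht => hasDerivAt_gaussTailApprox (hy.trans_le ht).ne') (hneg.add hrem)
    tendsto_gaussTailApprox_atTop
  rw [integral_add hneg hrem, integral_neg, integral_const_mul] at hftc
  linarith

lemma sq_rpow_neg_div_two {s : ℝ} (hs : 0 ≤ s) (r : ℝ) : (s ^ 2) ^ (-(r / 2)) = (s ^ r)⁻¹ := by
  rw [← rpow_natCast, ← rpow_mul hs, ← rpow_neg hs]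
  ring_nf

lemma Upsilon_sq_eq {s : ℝ} (hs : 0 < s) :
    Upsilon (s ^ 2) = 3 / (2 * √π) * (s ^ 5)⁻¹ + 45 / (8 * √π) * (s ^ 7)⁻¹
      - 105 / (4 * √π) * (s ^ 2 + 3 / 2) *
        (exp (s ^ 2) * ∫ t in Ioi s, exp (-t ^ 2) / t ^ 8) := by
  have hexp : exp (s ^ 2) = (exp (-s ^ 2))⁻¹ := by rw [exp_neg, inv_inv]
  have hhalf : (s ^ 2) ^ ((1 : ℝ) / 2) = s := by rw [← sqrt_eq_rpow, sqrt_sq hs.le]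
  rw [Upsilon, erfc, hhalf, sq_rpow_neg_div_two hs.le, rpow_one, sqrt_sq hs.le,
    integral_Ioi_exp_neg_sq_eq hs, gaussTailApprox, hexp]
  have : √π ≠ 0 := (sqrt_pos.2 pi_pos).ne'
  field_simp
  ring

theorem Upsilon_asymptotic_atTop :
    ∃ C x₀ : ℝ, 0 < C ∧ 0 < x₀ ∧ ∀ x ≥ x₀,
      |Upsilon x - (3 / (2 * Real.sqrt π)) * x ^ (-(5 / 2) : ℝ)|
        ≤ C * x ^ (-(7 / 2) : ℝ) := by
  refine ⟨525 / (16 * √π), 1, by positivity, one_pos, fun x hx => ?_⟩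
  obtain ⟨s, hs, rfl⟩ : ∃ s, 1 ≤ s ∧ x = s ^ 2 :=
    ⟨√x, one_le_sqrt.2 hx, (sq_sqrt (zero_le_one.trans hx)).symm⟩
  have hs0 : 0 < s := one_pos.trans_le hs
  set R := exp (s ^ 2) * ∫ t in Ioi s, exp (-t ^ 2) / t ^ 8
  have hR_nonneg : 0 ≤ R :=
    mul_nonneg (exp_pos _).le (integral_Ioi_exp_neg_sq_div_pow_nonneg 8 hs0)
  have herr : 105 / (4 * √π) * (s ^ 2 + 3 / 2) * R ≤ 525 / (16 * √π) * (s ^ 7)⁻¹ :=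
    calc _ ≤ 105 / (4 * √π) * (5 / 2 * s ^ 2) * (1 / (2 * s ^ 9)) := by
          gcongr
          · nlinarith
          · exact exp_sq_mul_integral_Ioi_exp_neg_sq_div_pow_le 8 hs0
      _ = 525 / (16 * √π) * (s ^ 7)⁻¹ := by field_simp; ring
  have hsecond_le : 45 / (8 * √π) * (s ^ 7)⁻¹ ≤ 525 / (16 * √π) * (s ^ 7)⁻¹ := by
    gcongr ?_ * _
    rw [div_le_div_iff₀ (by positivity) (by positivity)]
    nlinarith [sqrt_pos.2 pi_pos]
  rw [sq_rpow_neg_div_two hs0.le, sq_rpow_neg_div_two hs0.le, rpow_ofNat, rpow_ofNat,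
    Upsilon_sq_eq hs0, add_sub_assoc, add_sub_cancel_left]
  exact abs_sub_le_of_nonneg_of_le (by positivity) hsecond_le
    (mul_nonneg (by positivity) hR_nonneg) herr
end

section
/- Let Υ(x) = (2/√π)(x^{1/2} + x^{-1/2}) − 2(x + 3/2) e^x erfc(√x) for x > 0, and define f(u) = √π · u² · ∫_{3u/2}^∞ √y · Υ(y) dy for u > 0. Then f is a well-defined (the integral converges absolutely), continuous, strictly positive function on (0,∞), and u^{-1} f(u) → 1 as u → ∞. -/
/-!
With `T x = ∫_x^∞ e^{-t²} dt` (`gaussTail`), so that `erfc = (2/√π) T`, the function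
`G y = 4 y √y e^y T(√y) + 1 - 2y` (`upsilonTail`) satisfies `G' = -√π √y Υ(y)`, hence
`f(u) = u² G(3u/2)` as soon as `G → 0` at infinity. Everything then follows from the two
rational bounds on the Mills ratio `e^{x²} T(x)` given by consecutive convergents of its
continued fraction,
  `(2x³ + 5x) / (4x⁴ + 12x² + 3) < e^{x²} T(x) < (x² + 1) / (2x³ + 3x)`.
The upper one says exactly that `Υ > 0`, so the integral converges absolutely, and gives
`G(c) < 3/(2c + 3)`; the lower one gives `G(c) > (6c + 3)/(4c² + 12c + 3)`, so `c G(c) → 3/2`.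
Each bound is proved by checking the sign of the derivative of `T x - e^{-x²} P x`, which tends
to `0` at infinity.
-/

open Real MeasureTheory Set Filter

/-- `f(u) = √π u² ∫_{3u/2}^∞ √y Υ(y) dy`. -/
noncomputable def fFun (u : ℝ) : ℝ :=
  Real.sqrt π * u ^ 2 * ∫ y in Set.Ioi (3 * u / 2), Real.sqrt y * Upsilon y

open Topology

theorem pos_of_hasDerivAt_neg_of_tendsto_zero {g g' : ℝ → ℝ} {a : ℝ}
    (hd : ∀ x ∈ Ioi a, HasDerivAt g (g' x) x) (hneg : ∀ x ∈ Ioi a, g' x < 0)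
    (hg : Tendsto g atTop (𝓝 0)) {x : ℝ} (hx : a < x) : 0 < g x := by
  have hanti : StrictAntiOn g (Ioi a) := by
    refine strictAntiOn_of_hasDerivWithinAt_neg (f' := g') (convex_Ioi a)
      (fun y hy => (hd y hy).continuousAt.continuousWithinAt) (fun y hy => ?_) (fun y hy => ?_)
    · rw [interior_Ioi] at hy ⊢
      exact (hd y hy).hasDerivWithinAt
    · exact hneg y (interior_subset hy)
  have hx1 : x + 1 ∈ Ioi a := mem_Ioi.2 (by linarith)
  have hnonneg : 0 ≤ g (x + 1) := by
    refine le_of_tendsto hg ?_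
    filter_upwards [eventually_gt_atTop (x + 1)] with y hy
    exact (hanti hx1 (hx1.trans hy) hy).le
  exact hnonneg.trans_lt (hanti hx hx1 (by linarith))

lemma tendsto_zero_of_nonneg_of_le_inv {P : ℝ → ℝ}
    (h : ∀ x > 0, 0 ≤ P x ∧ P x ≤ x⁻¹) :
    Tendsto P atTop (𝓝 0) :=
  tendsto_of_tendsto_of_tendsto_of_le_of_le' tendsto_const_nhds tendsto_inv_atTop_zero
    (eventually_gt_atTop 0 |>.mono fun x hx => (h x hx).1)
    (eventually_gt_atTop 0 |>.mono fun x hx => (h x hx).2)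

noncomputable def gaussTail (x : ℝ) : ℝ := ∫ t in Ioi x, exp (-t ^ 2)

lemma integrable_exp_neg_sq : Integrable fun t : ℝ => exp (-t ^ 2) := by
  simpa using integrable_exp_neg_mul_sq one_pos

lemma hasDerivAt_gaussTail (x : ℝ) : HasDerivAt gaussTail (-exp (-x ^ 2)) x := by
  have hcont : Continuous fun t : ℝ => exp (-t ^ 2) := by fun_prop
  have hprim : HasDerivAt (fun x => ∫ t in (0 : ℝ)..x, exp (-t ^ 2)) (exp (-x ^ 2)) x :=
    intervalIntegral.integral_hasDerivAt_right integrable_exp_neg_sq.intervalIntegrable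
      (hcont.stronglyMeasurableAtFilter _ _) hcont.continuousAt
  refine (hprim.const_sub (gaussTail 0)).congr_of_eventuallyEq (.of_forall fun y => ?_)
  show gaussTail y = gaussTail 0 - _
  rw [← intervalIntegral.integral_Ioi_sub_Ioi' integrable_exp_neg_sq.integrableOn
    integrable_exp_neg_sq.integrableOn]
  exact (sub_sub_cancel _ _).symm

lemma tendsto_gaussTail : Tendsto gaussTail atTop (𝓝 0) :=
  tendsto_integral_Ioi_zero tendsto_id

lemma hasDerivAt_gaussTail_sub {P P' : ℝ → ℝ} {x : ℝ} (hP : HasDerivAt P (P' x) x) :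
    HasDerivAt (fun x => gaussTail x - exp (-x ^ 2) * P x)
      (-exp (-x ^ 2) * (1 - 2 * x * P x + P' x)) x := by
  have hexp : HasDerivAt (fun x : ℝ => exp (-x ^ 2)) (exp (-x ^ 2) * -(2 * x)) x := by
    simpa using ((hasDerivAt_pow 2 x).neg).exp
  exact ((hasDerivAt_gaussTail x).sub (hexp.mul hP)).congr_deriv (by ring)

lemma tendsto_gaussTail_sub {P : ℝ → ℝ} (hP : Tendsto P atTop (𝓝 0)) :
    Tendsto (fun x => gaussTail x - exp (-x ^ 2) * P x) atTop (𝓝 0) := by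
  have hexp : Tendsto (fun x : ℝ => exp (-x ^ 2)) atTop (𝓝 0) :=
    tendsto_exp_neg_atTop_nhds_zero.comp (tendsto_pow_atTop two_ne_zero)
  simpa using tendsto_gaussTail.sub (hexp.mul hP)

theorem exp_mul_lt_gaussTail {P P' : ℝ → ℝ} {a x : ℝ}
    (hd : ∀ x ∈ Ioi a, HasDerivAt P (P' x) x) (hP : Tendsto P atTop (𝓝 0))
    (hsign : ∀ x ∈ Ioi a, 0 < 1 - 2 * x * P x + P' x) (hx : a < x) :
    exp (-x ^ 2) * P x < gaussTail x :=
  sub_pos.1 <| pos_of_hasDerivAt_neg_of_tendsto_zero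
    (fun y hy => hasDerivAt_gaussTail_sub (hd y hy))
    (fun y hy => mul_neg_of_neg_of_pos (neg_neg_of_pos (exp_pos _)) (hsign y hy))
    (tendsto_gaussTail_sub hP) hx

theorem gaussTail_lt_exp_mul {P P' : ℝ → ℝ} {a x : ℝ}
    (hd : ∀ x ∈ Ioi a, HasDerivAt P (P' x) x) (hP : Tendsto P atTop (𝓝 0))
    (hsign : ∀ x ∈ Ioi a, 1 - 2 * x * P x + P' x < 0) (hx : a < x) :
    gaussTail x < exp (-x ^ 2) * P x := by
  have hpos := pos_of_hasDerivAt_neg_of_tendsto_zero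
    (g := fun x => -(gaussTail x - exp (-x ^ 2) * P x))
    (fun y hy => (hasDerivAt_gaussTail_sub (hd y hy)).neg)
    (fun y hy => by simpa using mul_neg_of_pos_of_neg (exp_pos (-y ^ 2)) (hsign y hy))
    (by simpa using (tendsto_gaussTail_sub hP).neg) hx
  linarith

theorem gaussTail_lt {x : ℝ} (hx : 0 < x) :
    gaussTail x < exp (-x ^ 2) * ((x ^ 2 + 1) / (2 * x ^ 3 + 3 * x)) := by
  refine gaussTail_lt_exp_mul (a := 0) (P := fun x => (x ^ 2 + 1) / (2 * x ^ 3 + 3 * x))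
    (P' := fun x => -(2 * x ^ 4 + 3 * x ^ 2 + 3) / (2 * x ^ 3 + 3 * x) ^ 2)
    (fun y (hy : 0 < y) => ?_)
    (tendsto_zero_of_nonneg_of_le_inv fun y hy => ⟨by positivity, ?_⟩)
    (fun y (hy : 0 < y) => ?_) hx
  · have hnum : HasDerivAt (fun x : ℝ => x ^ 2 + 1) (2 * y) y :=
      ((hasDerivAt_pow 2 y).add_const 1).congr_deriv (by push_cast; ring)
    have hden : HasDerivAt (fun x : ℝ => 2 * x ^ 3 + 3 * x) (6 * y ^ 2 + 3) y :=
      (((hasDerivAt_pow 3 y).const_mul 2).add ((hasDerivAt_id' y).const_mul 3)).congr_deriv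
        (by push_cast; ring)
    refine (hnum.div hden (by positivity)).congr_deriv ?_
    field_simp
    ring
  · rw [div_le_iff₀ (by positivity)]
    field_simp
    nlinarith
  · have hode : 1 - 2 * y * ((y ^ 2 + 1) / (2 * y ^ 3 + 3 * y))
        + -(2 * y ^ 4 + 3 * y ^ 2 + 3) / (2 * y ^ 3 + 3 * y) ^ 2
        = -(3 / (2 * y ^ 3 + 3 * y) ^ 2) := by
      field_simp
      ring
    rw [hode, neg_lt_zero]
    positivity

theorem lt_gaussTail {x : ℝ} (hx : 0 < x) :
    exp (-x ^ 2) * ((2 * x ^ 3 + 5 * x) / (4 * x ^ 4 + 12 * x ^ 2 + 3)) < gaussTail x := by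
  refine exp_mul_lt_gaussTail (a := 0)
    (P := fun x => (2 * x ^ 3 + 5 * x) / (4 * x ^ 4 + 12 * x ^ 2 + 3))
    (P' := fun x =>
      (-8 * x ^ 6 - 36 * x ^ 4 - 42 * x ^ 2 + 15) / (4 * x ^ 4 + 12 * x ^ 2 + 3) ^ 2)
    (fun y (hy : 0 < y) => ?_)
    (tendsto_zero_of_nonneg_of_le_inv fun y hy => ⟨by positivity, ?_⟩)
    (fun y (hy : 0 < y) => ?_) hx
  · have hnum : HasDerivAt (fun x : ℝ => 2 * x ^ 3 + 5 * x) (6 * y ^ 2 + 5) y :=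
      (((hasDerivAt_pow 3 y).const_mul 2).add ((hasDerivAt_id' y).const_mul 5)).congr_deriv
        (by push_cast; ring)
    have hden : HasDerivAt (fun x : ℝ => 4 * x ^ 4 + 12 * x ^ 2 + 3) (16 * y ^ 3 + 24 * y) y :=
      ((((hasDerivAt_pow 4 y).const_mul 4).add ((hasDerivAt_pow 2 y).const_mul 12)).add_const
        3).congr_deriv (by push_cast; ring)
    refine (hnum.div hden (by positivity)).congr_deriv ?_
    field_simp
    ring
  · rw [div_le_iff₀ (by positivity)]
    field_simp
    nlinarith
  · have hode : 1 - 2 * y * ((2 * y ^ 3 + 5 * y) / (4 * y ^ 4 + 12 * y ^ 2 + 3))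
        + (-8 * y ^ 6 - 36 * y ^ 4 - 42 * y ^ 2 + 15) / (4 * y ^ 4 + 12 * y ^ 2 + 3) ^ 2
        = 24 / (4 * y ^ 4 + 12 * y ^ 2 + 3) ^ 2 := by
      field_simp
      ring
    rw [hode]
    positivity

lemma erfc_eq_gaussTail (y : ℝ) : erfc y = 2 / √π * gaussTail y := rfl

lemma sqrt_mul_upsilon {y : ℝ} (hy : 0 < y) :
    √y * Upsilon y = 2 / √π * (y + 1 - 2 * √y * (y + 3 / 2) * exp y * gaussTail √y) := by
  rw [Upsilon, erfc_eq_gaussTail, ← sqrt_eq_rpow, rpow_neg hy.le, ← sqrt_eq_rpow]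
  field_simp
  rw [sq_sqrt hy.le]

lemma sqrt_mul_upsilon_pos {y : ℝ} (hy : 0 < y) : 0 < √y * Upsilon y := by
  have hs : 0 < √y := sqrt_pos.2 hy
  have hbound := mul_lt_mul_of_pos_left (gaussTail_lt hs)
    (by positivity : 0 < 2 * √y * (y + 3 / 2) * exp y)
  have hcancel : 2 * √y * (y + 3 / 2) * exp y * (exp (-√y ^ 2) *
      ((√y ^ 2 + 1) / (2 * √y ^ 3 + 3 * √y))) = y + 1 := by
    rw [pow_three, ← sq, sq_sqrt hy.le, exp_neg]
    field_simp
  rw [sqrt_mul_upsilon hy]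
  exact mul_pos (by positivity) (by linarith)

/-- `√π ∫_y^∞ √t Υ(t) dt`, in closed form. -/
noncomputable def upsilonTail (y : ℝ) : ℝ := 4 * y * √y * exp y * gaussTail √y + 1 - 2 * y

lemma hasDerivAt_upsilonTail {y : ℝ} (hy : 0 < y) :
    HasDerivAt upsilonTail (-(√π * (√y * Upsilon y))) y := by
  have hsqrt := hasDerivAt_sqrt hy.ne'
  have hprod := ((((hasDerivAt_id' y).const_mul 4).mul hsqrt).mul (hasDerivAt_exp y)).mul
    ((hasDerivAt_gaussTail √y).comp y hsqrt)
  refine ((hprod.add_const 1).sub ((hasDerivAt_id' y).const_mul 2)).congr_deriv ?_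
  simp only [Pi.mul_apply, Function.comp_apply]
  rw [sqrt_mul_upsilon hy, sq_sqrt hy.le, exp_neg]
  field_simp
  linear_combination (-4 * exp y * gaussTail √y) * sq_sqrt hy.le

lemma continuousOn_upsilonTail : ContinuousOn upsilonTail (Ioi 0) := fun _ hy =>
  (hasDerivAt_upsilonTail hy).continuousAt.continuousWithinAt

lemma upsilonTail_sq {s : ℝ} (hs : 0 ≤ s) :
    upsilonTail (s ^ 2) = 4 * s ^ 3 * exp (s ^ 2) * gaussTail s + 1 - 2 * s ^ 2 := by
  rw [upsilonTail, sqrt_sq hs]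
  ring

theorem upsilonTail_lt {c : ℝ} (hc : 0 < c) : upsilonTail c < 3 / (2 * c + 3) := by
  obtain ⟨s, hs, rfl⟩ : ∃ s, 0 < s ∧ s ^ 2 = c := ⟨√c, sqrt_pos.2 hc, sq_sqrt hc.le⟩
  have hbound := mul_lt_mul_of_pos_left (gaussTail_lt hs)
    (by positivity : 0 < 4 * s ^ 3 * exp (s ^ 2))
  have hcancel : 4 * s ^ 3 * exp (s ^ 2) * (exp (-s ^ 2) * ((s ^ 2 + 1) / (2 * s ^ 3 + 3 * s)))
      = 3 / (2 * s ^ 2 + 3) - 1 + 2 * s ^ 2 := by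
    rw [exp_neg]
    field_simp
    ring
  rw [upsilonTail_sq hs.le]
  linarith

theorem lt_upsilonTail {c : ℝ} (hc : 0 < c) :
    (6 * c + 3) / (4 * c ^ 2 + 12 * c + 3) < upsilonTail c := by
  obtain ⟨s, hs, rfl⟩ : ∃ s, 0 < s ∧ s ^ 2 = c := ⟨√c, sqrt_pos.2 hc, sq_sqrt hc.le⟩
  have hbound := mul_lt_mul_of_pos_left (lt_gaussTail hs)
    (by positivity : 0 < 4 * s ^ 3 * exp (s ^ 2))
  have hcancel : 4 * s ^ 3 * exp (s ^ 2) *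
      (exp (-s ^ 2) * ((2 * s ^ 3 + 5 * s) / (4 * s ^ 4 + 12 * s ^ 2 + 3)))
      = (6 * s ^ 2 + 3) / (4 * (s ^ 2) ^ 2 + 12 * s ^ 2 + 3) - 1 + 2 * s ^ 2 := by
    rw [exp_neg]
    field_simp
    ring
  rw [upsilonTail_sq hs.le]
  linarith

lemma upsilonTail_pos {c : ℝ} (hc : 0 < c) : 0 < upsilonTail c :=
  lt_trans (by positivity) (lt_upsilonTail hc)

theorem tendsto_mul_upsilonTail : Tendsto (fun c => c * upsilonTail c) atTop (𝓝 (3 / 2)) := by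
  have hlower : Tendsto (fun c : ℝ => 3 / 2 - 4 / c) atTop (𝓝 (3 / 2)) := by
    simpa using (tendsto_const_nhds (x := (3 / 2 : ℝ))).sub
      ((tendsto_const_nhds (x := (4 : ℝ))).div_atTop tendsto_id)
  refine tendsto_of_tendsto_of_tendsto_of_le_of_le' hlower tendsto_const_nhds ?_ ?_
  · filter_upwards [eventually_gt_atTop 0] with c hc
    have hgap : c * ((6 * c + 3) / (4 * c ^ 2 + 12 * c + 3)) - (3 / 2 - 4 / c)
        = (2 * c ^ 2 + 87 * c + 24) / (2 * c * (4 * c ^ 2 + 12 * c + 3)) := by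
      field_simp
      ring
    have hbound := mul_lt_mul_of_pos_left (lt_upsilonTail hc) hc
    have hgap_nonneg :
        0 ≤ (2 * c ^ 2 + 87 * c + 24) / (2 * c * (4 * c ^ 2 + 12 * c + 3)) := by positivity
    linarith
  · filter_upwards [eventually_gt_atTop 0] with c hc
    have hgap : 3 / 2 - c * (3 / (2 * c + 3)) = 9 / (2 * (2 * c + 3)) := by
      field_simp
      ring
    have hbound := mul_lt_mul_of_pos_left (upsilonTail_lt hc) hc
    have hgap_nonneg : 0 ≤ 9 / (2 * (2 * c + 3)) := by positivity
    linarith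

lemma tendsto_upsilonTail : Tendsto upsilonTail atTop (𝓝 0) := by
  have hlim := tendsto_mul_upsilonTail.mul tendsto_inv_atTop_zero
  rw [mul_zero] at hlim
  refine hlim.congr' ?_
  filter_upwards [eventually_gt_atTop 0] with c hc
  field_simp

lemma hasDerivAt_neg_upsilonTail_div {y : ℝ} (hy : 0 < y) :
    HasDerivAt (fun y => -upsilonTail y / √π) (√y * Upsilon y) y :=
  ((hasDerivAt_upsilonTail hy).neg.div_const √π).congr_deriv (by field_simp)

theorem integrableOn_sqrt_mul_upsilon {a : ℝ} (ha : 0 < a) :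
    IntegrableOn (fun y => √y * Upsilon y) (Ioi a) :=
  integrableOn_Ioi_deriv_of_nonneg' (fun _ hy => hasDerivAt_neg_upsilonTail_div (ha.trans_le hy))
    (fun _ hy => (sqrt_mul_upsilon_pos (ha.trans hy)).le)
    (by simpa using tendsto_upsilonTail.neg.div_const √π)

theorem integral_sqrt_mul_upsilon {a : ℝ} (ha : 0 < a) :
    ∫ y in Ioi a, √y * Upsilon y = upsilonTail a / √π := by
  rw [integral_Ioi_of_hasDerivAt_of_nonneg'
    (fun _ hy => hasDerivAt_neg_upsilonTail_div (ha.trans_le hy))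
    (fun _ hy => (sqrt_mul_upsilon_pos (ha.trans hy)).le)
    (by simpa using tendsto_upsilonTail.neg.div_const √π)]
  ring

lemma fFun_eq {u : ℝ} (hu : 0 < u) : fFun u = u ^ 2 * upsilonTail (3 * u / 2) := by
  rw [fFun, integral_sqrt_mul_upsilon (by positivity)]
  field_simp

theorem fFun_properties :
    (∀ u > (0 : ℝ),
        IntegrableOn (fun y => Real.sqrt y * Upsilon y) (Set.Ioi (3 * u / 2)) volume) ∧
    ContinuousOn fFun (Set.Ioi 0) ∧
    (∀ u > (0 : ℝ), 0 < fFun u) ∧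
    Tendsto (fun u => fFun u / u) atTop (nhds 1) := by
  refine ⟨fun u hu => integrableOn_sqrt_mul_upsilon (by positivity), ?_,
    fun u hu => ?_, ?_⟩
  · refine ContinuousOn.congr ?_ fun u hu => fFun_eq hu
    exact (continuousOn_pow 2).mul (continuousOn_upsilonTail.comp (by fun_prop)
      fun u (hu : 0 < u) => by simp only [mem_Ioi]; positivity)
  · rw [fFun_eq hu]
    exact mul_pos (by positivity) (upsilonTail_pos (by positivity))
  · have hscale : Tendsto (fun u : ℝ => 3 * u / 2) atTop atTop :=
      (tendsto_id.const_mul_atTop (by norm_num : (0 : ℝ) < 3)).atTop_div_const two_pos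
    have hlim := (tendsto_mul_upsilonTail.comp hscale).const_mul (2 / 3)
    rw [show (2 / 3 : ℝ) * (3 / 2) = 1 by norm_num] at hlim
    refine hlim.congr' ?_
    filter_upwards [eventually_gt_atTop 0] with u hu
    rw [Function.comp_apply, fFun_eq hu]
    field_simp
end

section
/- Cycle lemma: let n ≥ 1 and let x_1, …, x_n be integers with x_i ≥ −1 for every i and x_1 + ⋯ + x_n = −1. Then there is exactly one index r ∈ {0, 1, …, n−1} such that the cyclic shift (x_{r+1}, …, x_n, x_1, …, x_r) has all of its proper partial sums nonnegative, i.e., x_{r+1} + ⋯ + x_{r+j} ≥ 0 for every 1 ≤ j ≤ n−1 (indices taken mod n). -/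
/-!
Let `T j = x₀ + ⋯ + x_{j-1}` be the partial sums of the periodic extension of `x`, so that
`T (j + n) = T j - 1`. The shift by `r` has nonnegative proper partial sums exactly when `T r` is
a minimum of `T` on the window `[r, r + n)`. The first minimiser of `T` on `[0, n)` is such an
`r`: values of `T` before it exceed the minimum by at least `1`, which pays for the drop by `1`
after one period. Two such `r < r'` are impossible, since `T r ≤ T r' ≤ T (r + n) = T r - 1`.
-/

open Finset

section PeriodicPartialSum

variable {M : Type*} [AddCommMonoid M] (n : ℕ) (x : ℕ → M)

def periodicPartialSum (j : ℕ) : M := ∑ k ∈ range j, x (k % n)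

theorem periodicPartialSum_add_period (j : ℕ) :
    periodicPartialSum n x (j + n) = periodicPartialSum n x j + ∑ i ∈ range n, x i := by
  rw [periodicPartialSum, add_comm j, sum_range_add, add_comm]
  congr 1
  · exact sum_congr rfl fun k _ => by rw [Nat.add_mod_left]
  · exact sum_congr rfl fun k hk => by rw [Nat.mod_eq_of_lt (mem_range.mp hk)]

theorem sum_range_shift_mod {G : Type*} [AddCommGroup G] (x : ℕ → G) (r j : ℕ) :
    ∑ k ∈ range j, x ((r + k) % n) = periodicPartialSum n x (r + j) - periodicPartialSum n x r :=
  eq_sub_of_add_eq' (sum_range_add (fun k => x (k % n)) r j).symm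

end PeriodicPartialSum

theorem exists_first_minimizer_lt {α : Type*} [LinearOrder α] (T : ℕ → α) {n : ℕ} (hn : 0 < n) :
    ∃ r < n, (∀ i < n, T r ≤ T i) ∧ ∀ i < r, T r < T i := by
  have hmin : ∃ r, r < n ∧ ∀ i < n, T r ≤ T i := by
    obtain ⟨r, hr, hle⟩ := exists_min_image (range n) T ⟨0, mem_range.mpr hn⟩
    exact ⟨r, mem_range.mp hr, fun i hi => hle i (mem_range.mpr hi)⟩
  obtain ⟨hr, hle⟩ := Nat.find_spec hmin
  refine ⟨Nat.find hmin, hr, hle, fun i hi => ?_⟩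
  obtain ⟨k, hk, hlt⟩ : ∃ k < n, T k < T i := by
    have hnot := Nat.find_min hmin hi
    push Not at hnot
    exact hnot (hi.trans hr)
  exact (hle k hk).trans_lt hlt

section DropByOne

variable {n : ℕ} {T : ℕ → ℤ} (hT : ∀ i, T (i + n) = T i - 1)
include hT

theorem exists_lt_forall_le_add (hn : 0 < n) :
    ∃ r < n, ∀ j, 1 ≤ j → j ≤ n - 1 → T r ≤ T (r + j) := by
  obtain ⟨r, hr, hle, hlt⟩ := exists_first_minimizer_lt T hn
  refine ⟨r, hr, fun j _ hj => ?_⟩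
  rcases lt_or_ge (r + j) n with hwin | hwrap
  · exact hle _ hwin
  · have hback := hT (r + j - n)
    rw [Nat.sub_add_cancel hwrap] at hback
    linarith [hlt (r + j - n) (by omega)]

theorem not_forall_le_add_of_lt_of_lt_add {a b : ℕ} (hab : a < b) (hba : b < a + n)
    (ha : ∀ j, 1 ≤ j → j ≤ n - 1 → T a ≤ T (a + j))
    (hb : ∀ j, 1 ≤ j → j ≤ n - 1 → T b ≤ T (b + j)) : False := by
  have hab' := ha (b - a) (by omega) (by omega)
  have hba' := hb (a + n - b) (by omega) (by omega)
  rw [Nat.add_sub_cancel' hab.le] at hab'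
  rw [Nat.add_sub_cancel' hba.le, hT] at hba'
  omega

theorem existsUnique_lt_forall_le_add (hn : 0 < n) :
    ∃! r, r < n ∧ ∀ j, 1 ≤ j → j ≤ n - 1 → T r ≤ T (r + j) := by
  obtain ⟨r, hr, hmin⟩ := exists_lt_forall_le_add hT hn
  refine ⟨r, ⟨hr, hmin⟩, fun r' ⟨hr', hmin'⟩ => ?_⟩
  rcases lt_trichotomy r' r with hlt | heq | hgt
  · exact (not_forall_le_add_of_lt_of_lt_add hT hlt (by omega) hmin' hmin).elim
  · exact heq
  · exact (not_forall_le_add_of_lt_of_lt_add hT hgt (by omega) hmin hmin').elim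

end DropByOne

theorem cycle_lemma_general (n : ℕ) (hn : 1 ≤ n) (x : ℕ → ℤ)
    (hsum : ∑ i ∈ Finset.range n, x i = -1) :
    ∃! r : ℕ, r < n ∧
      ∀ j : ℕ, 1 ≤ j → j ≤ n - 1 →
        0 ≤ ∑ k ∈ Finset.range j, x ((r + k) % n) := by
  have hdrop : ∀ i, periodicPartialSum n x (i + n) = periodicPartialSum n x i - 1 := fun i => by
    rw [periodicPartialSum_add_period, hsum, sub_eq_add_neg]
  simp_rw [sum_range_shift_mod, sub_nonneg]
  exact existsUnique_lt_forall_le_add hdrop hn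

theorem cycle_lemma (n : ℕ) (hn : 1 ≤ n) (x : ℕ → ℤ)
    (hx : ∀ i < n, -1 ≤ x i)
    (hsum : ∑ i ∈ Finset.range n, x i = -1) :
    ∃! r : ℕ, r < n ∧
      ∀ j : ℕ, 1 ≤ j → j ≤ n - 1 →
        0 ≤ ∑ k ∈ Finset.range j, x ((r + k) % n) :=
  cycle_lemma_general n hn x hsum
end
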